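/- arXiv:1902.05224 — 3 statements merged into one kernel-verified Lean document; each statement's English description precedes it below -/
import Mathlib

section
/- For every character c, the SA interval of the one-character string c equals the interval [C[c]+1 .. C[c] + rank(L,c,n)]; that is, i ∈ I(c) if and only if C[c] + 1 ≤ i ≤ C[c] + rank(L,c,n). -/
/-- The suffix `T[i..n]` of a 1-indexed string of length `n` (as a list). -/
def suffix {α : Type*} (T : ℕ → α) (n i : ℕ) : List α :=
  (List.range' i (n + 1 - i)).map T

/-- `rank(L,c,i)`: the number of occurrences of the character `c` in `L[1..i]`. -/
def rankL {α : Type*} [DecidableEq α] (L : ℕ → α) (c : α) (i : ℕ) : ℕ :=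
  ((Finset.Icc 1 i).filter (fun j => L j = c)).card

/-- `C[c]`: the number of positions `j ∈ [1..n]` with `L[j]` strictly smaller than `c`. -/
def Cc {α : Type*} [LinearOrder α] (L : ℕ → α) (n : ℕ) (c : α) : ℕ :=
  ((Finset.Icc 1 n).filter (fun j => L j < c)).card

/-- `LF(i) = C[L[i]] + rank(L, L[i], i)`. -/
def LF {α : Type*} [LinearOrder α] (L : ℕ → α) (n i : ℕ) : ℕ :=
  Cc L n (L i) + rankL L (L i) i

/-- The SA interval of a nonempty string `Y`:
`I(Y) = {i ∈ [1..n] : Y is a prefix of T[SA[i]..]}`. -/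
def SAIv {α : Type*} (T : ℕ → α) (SA : ℕ → ℕ) (n : ℕ) (Y : List α) : Set ℕ :=
  {i | 1 ≤ i ∧ i ≤ n ∧ Y <+: suffix T n (SA i)}

/-!
Write `F j` for the first character `T[SA[j]]` of the `j`-th smallest suffix. Sortedness of the
suffixes makes `F` monotone, so `{j | F j < c}` and `{j | F j ≤ c}` are initial segments
`[1..a]`, `[1..b]` of `[1..n]`, and `I(c) = {j | F j = c} = [a+1..b]`. On the other hand
`L[j] = T[π(SA[j])]` for the cyclic predecessor `π` on positions, a permutation of `[1..n]`;
so `L` is a rearrangement of `F`, whence `C[c] = a` and `rank(L,c,n) = b - a`.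
-/

open Finset

lemma List.Lex.head_le {α : Type*} [LinearOrder α] {x y : α} {l m : List α}
    (h : List.Lex (· < ·) (x :: l) (y :: m)) : x ≤ y := by
  cases h with
  | cons _ => exact le_rfl
  | rel h => exact h.le

lemma Set.BijOn.card_filter_comp {β γ : Type*} {s : Finset β} {t : Finset γ} {g : β → γ}
    (hg : Set.BijOn g s t) (P : γ → Prop) [DecidablePred P] :
    #{j ∈ s | P (g j)} = #{p ∈ t | P p} := by
  refine card_nbij g (fun j hj => ?_) (hg.injOn.mono fun j hj => (mem_filter.mp hj).1)
    (fun p hp => ?_)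
  · simp only [coe_filter, Set.mem_ofPred_eq] at hj ⊢
    exact ⟨hg.mapsTo hj.1, hj.2⟩
  · simp only [coe_filter, Set.mem_ofPred_eq] at hp
    obtain ⟨j, hj, rfl⟩ := hg.surjOn hp.1
    exact ⟨j, by simpa using ⟨hj, hp.2⟩, rfl⟩

lemma Finset.mem_filter_Icc_iff_le_card {n : ℕ} {P : ℕ → Prop} [DecidablePred P]
    (hP : ∀ i j, 1 ≤ i → i ≤ j → j ≤ n → P j → P i) (i : ℕ) :
    i ∈ {j ∈ Icc 1 n | P j} ↔ 1 ≤ i ∧ i ≤ #{j ∈ Icc 1 n | P j} := by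
  simp only [mem_filter, mem_Icc]
  constructor
  · rintro ⟨⟨hi1, hin⟩, hPi⟩
    refine ⟨hi1, ?_⟩
    calc i = #(Icc 1 i) := by simp
      _ ≤ #{j ∈ Icc 1 n | P j} := card_le_card fun j hj => by
        simp only [mem_Icc, mem_filter] at hj ⊢
        exact ⟨⟨hj.1, hj.2.trans hin⟩, hP j i hj.1 hj.2 hin hPi⟩
  · rintro ⟨hi1, hik⟩
    by_contra hi
    have hsub : {j ∈ Icc 1 n | P j} ⊆ Icc 1 (i - 1) := fun j hj => by
      simp only [mem_Icc, mem_filter] at hj ⊢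
      refine ⟨hj.1.1, Nat.le_sub_one_of_lt (lt_of_not_ge fun hij => hi ?_)⟩
      exact ⟨⟨hi1, hij.trans hj.1.2⟩, hP i j hi1 hij hj.1.2 hj.2⟩
    have := card_le_card hsub
    rw [Nat.card_Icc] at this
    omega

lemma Finset.card_filter_le_eq_card_filter_lt_add {β α : Type*} [LinearOrder α]
    (s : Finset β) (F : β → α) (c : α) :
    #{j ∈ s | F j ≤ c} = #{j ∈ s | F j < c} + #{j ∈ s | F j = c} := by
  classical
  rw [← card_union_of_disjoint (disjoint_filter.mpr fun _ _ h => h.ne), ← filter_or]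
  simp only [le_iff_lt_or_eq]

lemma MonotoneOn.mem_filter_Icc_eq_iff {α : Type*} [LinearOrder α] {n : ℕ} {F : ℕ → α}
    (hF : MonotoneOn F (Set.Icc 1 n)) (c : α) (i : ℕ) :
    i ∈ {j ∈ Icc 1 n | F j = c} ↔
      #{j ∈ Icc 1 n | F j < c} + 1 ≤ i ∧
        i ≤ #{j ∈ Icc 1 n | F j < c} + #{j ∈ Icc 1 n | F j = c} := by
  have hFle {i j} (hi : 1 ≤ i) (hij : i ≤ j) (hjn : j ≤ n) : F i ≤ F j :=
    hF ⟨hi, hij.trans hjn⟩ ⟨hi.trans hij, hjn⟩ hij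
  have hlt := mem_filter_Icc_iff_le_card (P := (F · < c))
    (fun i j hi hij hjn => (hFle hi hij hjn).trans_lt) i
  have hle := mem_filter_Icc_iff_le_card (P := (F · ≤ c))
    (fun i j hi hij hjn => (hFle hi hij hjn).trans) i
  have hsplit : i ∈ {j ∈ Icc 1 n | F j = c} ↔
      i ∈ {j ∈ Icc 1 n | F j ≤ c} ∧ i ∉ {j ∈ Icc 1 n | F j < c} := by
    simp only [mem_filter, eq_iff_le_not_lt]
    tauto
  rw [hsplit, hle, hlt, card_filter_le_eq_card_filter_lt_add]
  omega

lemma suffix_eq_cons {α : Type*} (T : ℕ → α) {n p : ℕ} (hp : p ≤ n) :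
    suffix T n p = T p :: (List.range' (p + 1) (n - p)).map T := by
  rw [suffix, show n + 1 - p = n - p + 1 by omega, List.range'_succ, List.map_cons]

lemma bijOn_cyclicPred (n : ℕ) :
    Set.BijOn (fun p => if p = 1 then n else p - 1) (Set.Icc 1 n) (Set.Icc 1 n) := by
  have hmaps : Set.MapsTo (fun p => if p = 1 then n else p - 1) (Set.Icc 1 n) (Set.Icc 1 n) :=
    fun p hp => by simp only [Set.mem_Icc] at hp ⊢; split <;> omega
  refine ((Set.finite_Icc 1 n).injOn_iff_bijOn_of_mapsTo hmaps).mp fun p hp q hq h => ?_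
  simp only [Set.mem_Icc] at hp hq h
  split at h <;> split at h <;> omega

section SuffixArray

variable {α : Type*} {n : ℕ} {T : ℕ → α} {SA : ℕ → ℕ}

lemma mem_SAIv_singleton_iff [DecidableEq α]
    (hSA : Set.MapsTo SA (Set.Icc 1 n) (Set.Icc 1 n)) (c : α) (i : ℕ) :
    i ∈ SAIv T SA n [c] ↔ i ∈ {j ∈ Icc 1 n | T (SA j) = c} := by
  simp only [SAIv, Set.mem_ofPred_eq, mem_filter, mem_Icc, and_assoc]
  refine and_congr_right fun h1 => and_congr_right fun hin => ?_
  rw [suffix_eq_cons T (hSA ⟨h1, hin⟩).2, List.cons_prefix_cons]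
  simp [eq_comm]

lemma monotoneOn_head_of_sorted [LinearOrder α]
    (hSA : Set.MapsTo SA (Set.Icc 1 n) (Set.Icc 1 n))
    (hsorted : ∀ i j, 1 ≤ i → i < j → j ≤ n →
      List.Lex (· < ·) (suffix T n (SA i)) (suffix T n (SA j))) :
    MonotoneOn (fun j => T (SA j)) (Set.Icc 1 n) := by
  intro a ha b hb hab
  rcases hab.eq_or_lt with rfl | hab
  · exact le_rfl
  · have hlex := hsorted a b ha.1 hab hb.2
    rw [suffix_eq_cons T (hSA ha).2, suffix_eq_cons T (hSA hb).2] at hlex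
    exact hlex.head_le

lemma card_filter_bwt_eq_card_filter_head {L : ℕ → α}
    (hSA : Set.BijOn SA (Set.Icc 1 n) (Set.Icc 1 n))
    (hL : ∀ i, 1 ≤ i → i ≤ n → L i = if SA i = 1 then T n else T (SA i - 1))
    (P : α → Prop) [DecidablePred P] :
    #{j ∈ Icc 1 n | P (L j)} = #{j ∈ Icc 1 n | P (T (SA j))} := by
  have hLj : ∀ j ∈ Icc 1 n, P (L j) ↔ P (T (if SA j = 1 then n else SA j - 1)) :=
    fun j hj => by rw [mem_Icc] at hj; rw [hL j hj.1 hj.2, apply_ite T]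
  have hSA' : Set.BijOn SA (Icc 1 n : Finset ℕ) (Icc 1 n) := by rwa [coe_Icc]
  have hπSA : Set.BijOn (fun j => if SA j = 1 then n else SA j - 1) (Icc 1 n : Finset ℕ)
      (Icc 1 n) := by
    rw [coe_Icc]; exact (bijOn_cyclicPred n).comp hSA
  rw [filter_congr hLj, hπSA.card_filter_comp (fun p => P (T p)),
    hSA'.card_filter_comp (fun p => P (T p))]

end SuffixArray

theorem stmt3_general {α : Type*} [LinearOrder α] (n : ℕ)
    (T : ℕ → α) (SA : ℕ → ℕ) (L : ℕ → α)
    (hSAbij : Set.BijOn SA (Set.Icc 1 n) (Set.Icc 1 n))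
    (hSAsorted : ∀ i j, 1 ≤ i → i < j → j ≤ n →
      List.Lex (· < ·) (suffix T n (SA i)) (suffix T n (SA j)))
    (hL : ∀ i, 1 ≤ i → i ≤ n → L i = if SA i = 1 then T n else T (SA i - 1)) :
    ∀ (c : α) (i : ℕ),
      i ∈ SAIv T SA n [c] ↔ (Cc L n c + 1 ≤ i ∧ i ≤ Cc L n c + rankL L c n) := by
  intro c i
  have hF := monotoneOn_head_of_sorted hSAbij.mapsTo hSAsorted
  rw [mem_SAIv_singleton_iff hSAbij.mapsTo, hF.mem_filter_Icc_eq_iff, Cc, rankL,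
    card_filter_bwt_eq_card_filter_head hSAbij hL (· < c),
    card_filter_bwt_eq_card_filter_head hSAbij hL (· = c)]

/-- For every character `c`, the SA interval of the one-character string `c`
equals the interval `[C[c]+1 .. C[c] + rank(L,c,n)]`. -/
theorem stmt3 {α : Type*} [LinearOrder α] (n : ℕ) (hn : 1 ≤ n)
    (T : ℕ → α) (SA : ℕ → ℕ) (L : ℕ → α)
    (hlast : ∀ i, 1 ≤ i → i < n → T n < T i)
    (hSAbij : Set.BijOn SA (Set.Icc 1 n) (Set.Icc 1 n))
    (hSAsorted : ∀ i j, 1 ≤ i → i < j → j ≤ n →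
      List.Lex (· < ·) (suffix T n (SA i)) (suffix T n (SA j)))
    (hL : ∀ i, 1 ≤ i → i ≤ n → L i = if SA i = 1 then T n else T (SA i - 1)) :
    ∀ (c : α) (i : ℕ),
      i ∈ SAIv T SA n [c] ↔ (Cc L n c + 1 ≤ i ∧ i ≤ Cc L n c + rankL L c n) :=
  stmt3_general n T SA L hSAbij hSAsorted hL
end

section
/- Backward search is correct: let Y be a nonempty string whose SA interval I(Y) equals a nonempty interval [b..e], and let c be a character with c ≠ T[n]. Then I(cY) equals the interval [C[c] + rank(L,c,b−1) + 1 .. C[c] + rank(L,c,e)]; in particular, I(cY) is empty if and only if rank(L,c,e) = rank(L,c,b−1). -/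
lemma suffix_cons {α : Type*} (T : ℕ → α) {n k : ℕ} (hk1 : 1 ≤ k) (hk : k ≤ n) :
    suffix T n k = T k :: suffix T n (k + 1) := by
  unfold suffix
  have h1 : n + 1 - k = (n - k) + 1 := by omega
  have h2 : n + 1 - (k + 1) = n - k := by omega
  rw [h1, h2, List.range'_succ, List.map_cons]

lemma rank_mono {α : Type*} [DecidableEq α] (L : ℕ → α) (c : α) {i j : ℕ} (h : i ≤ j) :
    rankL L c i ≤ rankL L c j :=
  Finset.card_le_card (Finset.filter_subset_filter _ (Finset.Icc_subset_Icc_right h))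

lemma rank_step {α : Type*} [DecidableEq α] (L : ℕ → α) {c : α} {j : ℕ} (hj : 1 ≤ j)
    (h : L j = c) : rankL L c j = rankL L c (j - 1) + 1 := by
  unfold rankL
  have hins : Finset.Icc 1 j = insert j (Finset.Icc 1 (j - 1)) := by
    ext x; simp only [Finset.mem_Icc, Finset.mem_insert]; omega
  rw [hins, Finset.filter_insert, if_pos h, Finset.card_insert_of_notMem]
  simp only [Finset.mem_filter, Finset.mem_Icc]
  omega

/-- An initial segment of `[1..n]` equals `Icc 1 (card)`. -/
lemma initial_seg {n : ℕ} {s : Finset ℕ} (hs : s ⊆ Finset.Icc 1 n)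
    (hdc : ∀ i ∈ s, ∀ j, 1 ≤ j → j ≤ i → j ∈ s) : s = Finset.Icc 1 s.card := by
  have hsub : Finset.Icc 1 s.card ⊆ s := by
    intro j hj
    rw [Finset.mem_Icc] at hj
    by_contra hjs
    have hsub2 : s ⊆ Finset.Icc 1 (j - 1) := by
      intro x hx
      have hx1 : 1 ≤ x ∧ x ≤ n := Finset.mem_Icc.mp (hs hx)
      rw [Finset.mem_Icc]
      refine ⟨hx1.1, ?_⟩
      by_contra hxj
      exact hjs (hdc x hx j hj.1 (by omega))
    have := Finset.card_le_card hsub2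
    rw [Nat.card_Icc] at this
    omega
  have hle : s.card ≤ (Finset.Icc 1 s.card).card := by
    rw [Nat.card_Icc]; omega
  exact (Finset.eq_of_subset_of_card_le hsub hle).symm

/-- Transport counting along `SA`. -/
lemma count_SA {α : Type*} {n : ℕ} {T : ℕ → α} {SA : ℕ → ℕ}
    (hSAbij : Set.BijOn SA (Set.Icc 1 n) (Set.Icc 1 n))
    (p : α → Prop) [DecidablePred p] :
    ((Finset.Icc 1 n).filter (fun i => p (T (SA i)))).card
      = ((Finset.Icc 1 n).filter (fun k => p (T k))).card := by
  apply Finset.card_bij (fun a _ => SA a)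
  · intro a ha
    rw [Finset.mem_filter, Finset.mem_Icc] at ha ⊢
    have := hSAbij.mapsTo (Set.mem_Icc.mpr ⟨ha.1.1, ha.1.2⟩)
    exact ⟨Set.mem_Icc.mp this, ha.2⟩
  · intro a₁ ha₁ a₂ ha₂ h
    rw [Finset.mem_filter, Finset.mem_Icc] at ha₁ ha₂
    exact hSAbij.injOn (Set.mem_Icc.mpr ha₁.1) (Set.mem_Icc.mpr ha₂.1) h
  · intro k hk
    rw [Finset.mem_filter, Finset.mem_Icc] at hk
    obtain ⟨a, ha, hak⟩ := hSAbij.surjOn (Set.mem_Icc.mpr hk.1)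
    rw [Set.mem_Icc] at ha
    refine ⟨a, ?_, hak⟩
    rw [Finset.mem_filter, Finset.mem_Icc, hak]
    exact ⟨ha, hk.2⟩

/-- Transport counting from `L` to `T`. -/
lemma count_L {α : Type*} {n : ℕ} (hn : 1 ≤ n) {T : ℕ → α} {SA : ℕ → ℕ} {L : ℕ → α}
    (hSAbij : Set.BijOn SA (Set.Icc 1 n) (Set.Icc 1 n))
    (hL : ∀ i, 1 ≤ i → i ≤ n → L i = if SA i = 1 then T n else T (SA i - 1))
    (p : α → Prop) [DecidablePred p] :
    ((Finset.Icc 1 n).filter (fun j => p (L j))).card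
      = ((Finset.Icc 1 n).filter (fun k => p (T k))).card := by
  have hSAmem : ∀ j, 1 ≤ j → j ≤ n → 1 ≤ SA j ∧ SA j ≤ n := by
    intro j h1 h2
    exact Set.mem_Icc.mp (hSAbij.mapsTo (Set.mem_Icc.mpr ⟨h1, h2⟩))
  have hLg : ∀ j, 1 ≤ j → j ≤ n → L j = T (if SA j = 1 then n else SA j - 1) := by
    intro j h1 h2
    rw [hL j h1 h2]
    by_cases h : SA j = 1 <;> simp [h]
  apply Finset.card_bij (fun a _ => if SA a = 1 then n else SA a - 1)
  · intro a ha
    rw [Finset.mem_filter, Finset.mem_Icc] at ha ⊢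
    have hm := hSAmem a ha.1.1 ha.1.2
    constructor
    · by_cases h : SA a = 1 <;> simp [h] <;> omega
    · rw [← hLg a ha.1.1 ha.1.2]; exact ha.2
  · intro a₁ ha₁ a₂ ha₂ h
    rw [Finset.mem_filter, Finset.mem_Icc] at ha₁ ha₂
    have hm₁ := hSAmem a₁ ha₁.1.1 ha₁.1.2
    have hm₂ := hSAmem a₂ ha₂.1.1 ha₂.1.2
    have hSAeq : SA a₁ = SA a₂ := by
      by_cases h1 : SA a₁ = 1 <;> by_cases h2 : SA a₂ = 1 <;> simp [h1, h2] at h <;> omega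
    exact hSAbij.injOn (Set.mem_Icc.mpr ha₁.1) (Set.mem_Icc.mpr ha₂.1) hSAeq
  · intro k hk
    rw [Finset.mem_filter, Finset.mem_Icc] at hk
    by_cases hkn : k = n
    · obtain ⟨a, ha, hak⟩ := hSAbij.surjOn (Set.mem_Icc.mpr ⟨le_refl 1, hn⟩)
      rw [Set.mem_Icc] at ha
      refine ⟨a, ?_, by simp [hak, hkn]⟩
      rw [Finset.mem_filter, Finset.mem_Icc]
      refine ⟨ha, ?_⟩
      rw [hLg a ha.1 ha.2, hak]
      simpa [hkn] using hk.2
    · obtain ⟨a, ha, hak⟩ := hSAbij.surjOn (Set.mem_Icc.mpr (⟨by omega, by omega⟩ :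
        1 ≤ k + 1 ∧ k + 1 ≤ n))
      rw [Set.mem_Icc] at ha
      have hk1 := hk.1
      have hne : SA a ≠ 1 := by omega
      have hifeq : (if SA a = 1 then n else SA a - 1) = k := by
        rw [if_neg hne, hak]; omega
      refine ⟨a, ?_, hifeq⟩
      rw [Finset.mem_filter, Finset.mem_Icc]
      refine ⟨ha, ?_⟩
      rw [hLg a ha.1 ha.2, hifeq]
      exact hk.2

/-- Backward search is correct: if the SA interval of a nonempty string `Y`
equals a nonempty interval `[b..e]` and `c ≠ T[n]`, then the SA interval of
`cY` equals `[C[c] + rank(L,c,b−1) + 1 .. C[c] + rank(L,c,e)]`; in particular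
it is empty iff `rank(L,c,e) = rank(L,c,b−1)`. -/
theorem stmt5 {α : Type*} [LinearOrder α] (n : ℕ) (hn : 1 ≤ n)
    (T : ℕ → α) (SA : ℕ → ℕ) (L : ℕ → α)
    (hlast : ∀ i, 1 ≤ i → i < n → T n < T i)
    (hSAbij : Set.BijOn SA (Set.Icc 1 n) (Set.Icc 1 n))
    (hSAsorted : ∀ i j, 1 ≤ i → i < j → j ≤ n →
      List.Lex (· < ·) (suffix T n (SA i)) (suffix T n (SA j)))
    (hL : ∀ i, 1 ≤ i → i ≤ n → L i = if SA i = 1 then T n else T (SA i - 1))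
    (Y : List α) (hY : Y ≠ []) (b e : ℕ) (hbe : b ≤ e)
    (hIv : SAIv T SA n Y = Set.Icc b e)
    (c : α) (hc : c ≠ T n) :
    SAIv T SA n (c :: Y) =
      Set.Icc (Cc L n c + rankL L c (b - 1) + 1) (Cc L n c + rankL L c e) ∧
    (SAIv T SA n (c :: Y) = ∅ ↔ rankL L c e = rankL L c (b - 1)) := by
  -- the inverse of SA on [1..n]
  set F := Function.invFunOn SA (Set.Icc 1 n) with hFdef
  have hSAmem : ∀ j, 1 ≤ j → j ≤ n → 1 ≤ SA j ∧ SA j ≤ n := by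
    intro j h1 h2
    exact Set.mem_Icc.mp (hSAbij.mapsTo (Set.mem_Icc.mpr ⟨h1, h2⟩))
  have hFmem : ∀ y, 1 ≤ y → y ≤ n → (1 ≤ F y ∧ F y ≤ n) ∧ SA (F y) = y := by
    intro y h1 h2
    obtain ⟨x, hx, hxy⟩ := hSAbij.surjOn (Set.mem_Icc.mpr ⟨h1, h2⟩)
    exact ⟨Set.mem_Icc.mp (Function.invFunOn_mem ⟨x, hx, hxy⟩),
      Function.invFunOn_eq ⟨x, hx, hxy⟩⟩
  have hFSA : ∀ x, 1 ≤ x → x ≤ n → F (SA x) = x := by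
    intro x h1 h2
    exact hSAbij.injOn.leftInvOn_invFunOn (Set.mem_Icc.mpr ⟨h1, h2⟩)
  -- converse of sortedness
  have hsorted' : ∀ i j, 1 ≤ i → i ≤ n → 1 ≤ j → j ≤ n →
      List.Lex (· < ·) (suffix T n (SA i)) (suffix T n (SA j)) → i < j := by
    intro i j hi1 hin hj1 hjn hlex
    by_contra h
    push_neg at h
    rcases eq_or_lt_of_le h with heq | hlt
    · rw [heq] at hlex; exact asymm hlex hlex
    · exact asymm hlex (hSAsorted j i hj1 hlt hin)
  -- head comparison from lex
  have hhead0 : ∀ (x y : α) (l l' : List α), List.Lex (· < ·) (x :: l) (y :: l') → x ≤ y := by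
    intro x y l l' h
    cases h with
    | rel h => exact le_of_lt h
    | cons h => exact le_refl _
  have hhead : ∀ k k', 1 ≤ k → k ≤ n → 1 ≤ k' → k' ≤ n →
      List.Lex (· < ·) (suffix T n k) (suffix T n k') → T k ≤ T k' := by
    intro k k' a1 a2 a3 a4 hlex
    rw [suffix_cons T a1 a2, suffix_cons T a3 a4] at hlex
    exact hhead0 _ _ _ _ hlex
  -- a position whose character is c cannot be n
  have hTn : ∀ k, 1 ≤ k → k ≤ n → T k = c → k < n := by
    intro k h1 h2 hk
    rcases eq_or_lt_of_le h2 with heq | h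
    · exact absurd (heq ▸ hk).symm hc
    · exact h
  -- key sets
  set A' := (Finset.Icc 1 n).filter (fun i => T (SA i) < c) with hA'def
  set AB := (Finset.Icc 1 n).filter (fun i => T (SA i) ≤ c) with hABdef
  set B := (Finset.Icc 1 n).filter (fun i => T (SA i) = c) with hBdef
  set m := B.card with hmdef
  -- A' and AB are initial segments
  have hA'dc : ∀ i ∈ A', ∀ j, 1 ≤ j → j ≤ i → j ∈ A' := by
    intro i hi j hj1 hji
    rw [hA'def, Finset.mem_filter, Finset.mem_Icc] at hi ⊢
    refine ⟨⟨hj1, le_trans hji hi.1.2⟩, ?_⟩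
    rcases eq_or_lt_of_le hji with heq | hlt
    · rw [heq]; exact hi.2
    · have hmj := hSAmem j hj1 (le_trans hji hi.1.2)
      have hmi := hSAmem i hi.1.1 hi.1.2
      exact lt_of_le_of_lt
        (hhead (SA j) (SA i) hmj.1 hmj.2 hmi.1 hmi.2
          (hSAsorted j i hj1 hlt hi.1.2)) hi.2
  have hABdc : ∀ i ∈ AB, ∀ j, 1 ≤ j → j ≤ i → j ∈ AB := by
    intro i hi j hj1 hji
    rw [hABdef, Finset.mem_filter, Finset.mem_Icc] at hi ⊢
    refine ⟨⟨hj1, le_trans hji hi.1.2⟩, ?_⟩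
    rcases eq_or_lt_of_le hji with heq | hlt
    · rw [heq]; exact hi.2
    · have hmj := hSAmem j hj1 (le_trans hji hi.1.2)
      have hmi := hSAmem i hi.1.1 hi.1.2
      exact le_trans
        (hhead (SA j) (SA i) hmj.1 hmj.2 hmi.1 hmi.2
          (hSAsorted j i hj1 hlt hi.1.2)) hi.2
  have hA'card : A'.card = Cc L n c := by
    rw [hA'def, Cc, count_SA hSAbij (fun x => x < c),
      count_L hn hSAbij hL (fun x => x < c)]
  have hBcard : B.card = ((Finset.Icc 1 n).filter (fun j => L j = c)).card := by
    rw [hBdef, count_SA hSAbij (fun x => x = c),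
      count_L hn hSAbij hL (fun x => x = c)]
  have hABsplit : AB.card = Cc L n c + m := by
    have hU : AB = A' ∪ B := by
      ext x
      rw [hABdef, hA'def, hBdef, Finset.mem_union, Finset.mem_filter, Finset.mem_filter,
        Finset.mem_filter]
      constructor
      · rintro ⟨hx, hx2⟩
        rcases lt_or_eq_of_le hx2 with h | h
        · exact Or.inl ⟨hx, h⟩
        · exact Or.inr ⟨hx, h⟩
      · rintro (⟨hx, hx2⟩ | ⟨hx, hx2⟩)
        · exact ⟨hx, le_of_lt hx2⟩
        · exact ⟨hx, le_of_eq hx2⟩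
    have hdisj : Disjoint A' B := by
      rw [Finset.disjoint_left]
      intro x hx hx2
      rw [hA'def, Finset.mem_filter] at hx
      rw [hBdef, Finset.mem_filter] at hx2
      exact absurd hx2.2 (ne_of_lt hx.2)
    rw [hU, Finset.card_union_of_disjoint hdisj, hA'card]
  have hA'eq : A' = Finset.Icc 1 (Cc L n c) := by
    rw [← hA'card]; exact initial_seg (Finset.filter_subset _ _) hA'dc
  have hABeq : AB = Finset.Icc 1 (Cc L n c + m) := by
    rw [← hABsplit]; exact initial_seg (Finset.filter_subset _ _) hABdc
  -- characterization of B
  have hB : ∀ i, i ∈ B ↔ Cc L n c + 1 ≤ i ∧ i ≤ Cc L n c + m := by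
    intro i
    constructor
    · intro hi
      rw [hBdef, Finset.mem_filter, Finset.mem_Icc] at hi
      have hiAB : i ∈ AB := by
        rw [hABdef, Finset.mem_filter, Finset.mem_Icc]
        exact ⟨hi.1, le_of_eq hi.2⟩
      have hiA' : i ∉ A' := by
        rw [hA'def, Finset.mem_filter]
        rintro ⟨_, h⟩
        exact absurd hi.2 (ne_of_lt h)
      rw [hABeq, Finset.mem_Icc] at hiAB
      rw [hA'eq, Finset.mem_Icc] at hiA'
      omega
    · rintro ⟨h1, h2⟩
      have hiAB : i ∈ AB := by rw [hABeq, Finset.mem_Icc]; omega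
      have hiA' : i ∉ A' := by rw [hA'eq, Finset.mem_Icc]; omega
      rw [hABdef, Finset.mem_filter] at hiAB
      rw [hA'def, Finset.mem_filter] at hiA'
      rw [hBdef, Finset.mem_filter]
      refine ⟨hiAB.1, ?_⟩
      rcases lt_or_eq_of_le hiAB.2 with h | h
      · exact absurd ⟨hiAB.1, h⟩ hiA'
      · exact h
  -- positions with L j = c have SA j ≥ 2, and T (SA j - 1) = c
  have hLc : ∀ j, 1 ≤ j → j ≤ n → L j = c → 2 ≤ SA j ∧ SA j ≤ n ∧ T (SA j - 1) = c := by
    intro j h1 h2 hLj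
    have hm := hSAmem j h1 h2
    have hne : SA j ≠ 1 := by
      intro h
      rw [hL j h1 h2, if_pos h] at hLj
      exact hc hLj.symm
    refine ⟨by omega, hm.2, ?_⟩
    rw [hL j h1 h2, if_neg hne] at hLj
    exact hLj
  -- strict monotonicity of the LF mapping on c-positions
  have hmono : ∀ j₁ j₂, 1 ≤ j₁ → j₁ < j₂ → j₂ ≤ n → L j₁ = c → L j₂ = c →
      F (SA j₁ - 1) < F (SA j₂ - 1) := by
    intro j₁ j₂ h1 h12 h2n hc1 hc2
    obtain ⟨ha1, ha2, ha3⟩ := hLc j₁ h1 (by omega) hc1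
    obtain ⟨hb1, hb2, hb3⟩ := hLc j₂ (by omega) h2n hc2
    have hlex := hSAsorted j₁ j₂ h1 h12 h2n
    have e1 : SA j₁ - 1 + 1 = SA j₁ := by omega
    have e2 : SA j₂ - 1 + 1 = SA j₂ := by omega
    have hs1 : suffix T n (SA j₁ - 1) = c :: suffix T n (SA j₁) := by
      rw [suffix_cons T (by omega : 1 ≤ SA j₁ - 1) (by omega), ha3, e1]
    have hs2 : suffix T n (SA j₂ - 1) = c :: suffix T n (SA j₂) := by
      rw [suffix_cons T (by omega : 1 ≤ SA j₂ - 1) (by omega), hb3, e2]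
    have hF1 := hFmem (SA j₁ - 1) (by omega) (by omega)
    have hF2 := hFmem (SA j₂ - 1) (by omega) (by omega)
    apply hsorted' _ _ hF1.1.1 hF1.1.2 hF2.1.1 hF2.1.2
    rw [hF1.2, hF2.2, hs1, hs2]
    exact List.Lex.cons hlex
  -- the LF key lemma
  have hLF : ∀ j, 1 ≤ j → j ≤ n → L j = c → F (SA j - 1) = Cc L n c + rankL L c j := by
    intro j h1 h2 hLj
    obtain ⟨ha1, ha2, ha3⟩ := hLc j h1 h2 hLj
    set i := F (SA j - 1) with hidef
    have hFi := hFmem (SA j - 1) (by omega) (by omega)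
    have hiB : i ∈ B := by
      rw [hBdef, Finset.mem_filter, Finset.mem_Icc, hFi.2]
      exact ⟨⟨hFi.1.1, hFi.1.2⟩, ha3⟩
    have hiB' := (hB i).mp hiB
    -- count: rankL L c j = i - Cc
    have hcard : ((Finset.Icc 1 j).filter (fun j' => L j' = c)).card
        = (Finset.Icc (Cc L n c + 1) i).card := by
      apply Finset.card_bij (fun a _ => F (SA a - 1))
      · intro a ha
        rw [Finset.mem_filter, Finset.mem_Icc] at ha
        obtain ⟨hb1, hb2, hb3⟩ := hLc a ha.1.1 (le_trans ha.1.2 h2) ha.2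
        have hFa := hFmem (SA a - 1) (by omega) (by omega)
        have : F (SA a - 1) ∈ B := by
          rw [hBdef, Finset.mem_filter, Finset.mem_Icc, hFa.2]
          exact ⟨⟨hFa.1.1, hFa.1.2⟩, hb3⟩
        have hmem := (hB _).mp this
        rw [Finset.mem_Icc]
        refine ⟨hmem.1, ?_⟩
        rcases eq_or_lt_of_le ha.1.2 with heq | hlt
        · rw [heq]
        · exact le_of_lt (hmono a j ha.1.1 hlt h2 ha.2 hLj)
      · intro a₁ ha₁ a₂ ha₂ hfeq
        rw [Finset.mem_filter, Finset.mem_Icc] at ha₁ ha₂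
        obtain ⟨hb1, hb2, _⟩ := hLc a₁ ha₁.1.1 (le_trans ha₁.1.2 h2) ha₁.2
        obtain ⟨hd1, hd2, _⟩ := hLc a₂ ha₂.1.1 (le_trans ha₂.1.2 h2) ha₂.2
        have hFa₁ := hFmem (SA a₁ - 1) (by omega) (by omega)
        have hFa₂ := hFmem (SA a₂ - 1) (by omega) (by omega)
        have : SA a₁ - 1 = SA a₂ - 1 := by rw [← hFa₁.2, ← hFa₂.2, hfeq]
        have hSAeq : SA a₁ = SA a₂ := by omega
        exact hSAbij.injOn (Set.mem_Icc.mpr ⟨ha₁.1.1, le_trans ha₁.1.2 h2⟩)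
          (Set.mem_Icc.mpr ⟨ha₂.1.1, le_trans ha₂.1.2 h2⟩) hSAeq
      · intro i' hi'
        rw [Finset.mem_Icc] at hi'
        have hi'B : i' ∈ B := (hB i').mpr ⟨hi'.1, le_trans hi'.2 hiB'.2⟩
        rw [hBdef, Finset.mem_filter, Finset.mem_Icc] at hi'B
        have hi'n : SA i' < n := hTn _ (hSAmem i' hi'B.1.1 hi'B.1.2).1
          (hSAmem i' hi'B.1.1 hi'B.1.2).2 hi'B.2
        have hSAi' := hSAmem i' hi'B.1.1 hi'B.1.2
        have hFj' := hFmem (SA i' + 1) (by omega) (by omega)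
        set j' := F (SA i' + 1) with hj'def
        have hne : SA j' ≠ 1 := by rw [hFj'.2]; omega
        have hLj' : L j' = c := by
          rw [hL j' hFj'.1.1 hFj'.1.2, if_neg hne, hFj'.2]
          simpa using hi'B.2
        have hphi : F (SA j' - 1) = i' := by
          have : SA j' - 1 = SA i' := by rw [hFj'.2]; omega
          rw [this, hFSA i' hi'B.1.1 hi'B.1.2]
        have hj'j : j' ≤ j := by
          by_contra hgt
          push_neg at hgt
          have := hmono j j' h1 hgt hFj'.1.2 hLj hLj'
          rw [hphi, ← hidef] at this
          omega
        refine ⟨j', ?_, hphi⟩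
        rw [Finset.mem_filter, Finset.mem_Icc]
        exact ⟨⟨hFj'.1.1, hj'j⟩, hLj'⟩
    rw [Nat.card_Icc] at hcard
    have : rankL L c j = i + 1 - (Cc L n c + 1) := hcard
    omega
  -- bounds on b and e
  have heIv : e ∈ SAIv T SA n Y := by rw [hIv]; exact Set.mem_Icc.mpr ⟨hbe, le_refl e⟩
  have hbIv : b ∈ SAIv T SA n Y := by rw [hIv]; exact Set.mem_Icc.mpr ⟨le_refl b, hbe⟩
  obtain ⟨he1, he2, -⟩ := heIv
  obtain ⟨hb1, hb2, -⟩ := hbIv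
  have hrankn : rankL L c e ≤ m := by
    rw [hmdef, hBcard]
    exact rank_mono L c he2
  -- main set equality
  have hmain : SAIv T SA n (c :: Y) =
      Set.Icc (Cc L n c + rankL L c (b - 1) + 1) (Cc L n c + rankL L c e) := by
    ext i
    simp only [SAIv, Set.mem_setOf_eq, Set.mem_Icc]
    constructor
    · rintro ⟨hi1, hin, hpre⟩
      have hSAi := hSAmem i hi1 hin
      rw [suffix_cons T hSAi.1 hSAi.2] at hpre
      obtain ⟨hceq, hYpre⟩ := List.cons_prefix_cons.mp hpre
      have hin' : SA i < n := hTn _ hSAi.1 hSAi.2 hceq.symm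
      have hFj := hFmem (SA i + 1) (by omega) (by omega)
      set j := F (SA i + 1) with hjdef
      have hne : SA j ≠ 1 := by rw [hFj.2]; omega
      have hLj : L j = c := by
        rw [hL j hFj.1.1 hFj.1.2, if_neg hne, hFj.2]
        simpa using hceq.symm
      have hjIv : j ∈ SAIv T SA n Y := by
        refine ⟨hFj.1.1, hFj.1.2, ?_⟩
        rw [hFj.2]
        exact hYpre
      rw [hIv, Set.mem_Icc] at hjIv
      have hkey := hLF j hFj.1.1 hFj.1.2 hLj
      have : SA j - 1 = SA i := by rw [hFj.2]; omega
      rw [this, hFSA i hi1 hin] at hkey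
      have hstep := rank_step L hFj.1.1 hLj
      have hle1 : rankL L c (b - 1) ≤ rankL L c (j - 1) := rank_mono L c (by omega)
      have hle2 : rankL L c j ≤ rankL L c e := rank_mono L c hjIv.2
      omega
    · rintro ⟨hlo, hhi⟩
      have hiB : i ∈ B := (hB i).mpr ⟨by omega, by omega⟩
      rw [hBdef, Finset.mem_filter, Finset.mem_Icc] at hiB
      obtain ⟨⟨hi1, hin⟩, hTc⟩ := hiB
      have hSAi := hSAmem i hi1 hin
      have hin' : SA i < n := hTn _ hSAi.1 hSAi.2 hTc
      have hFj := hFmem (SA i + 1) (by omega) (by omega)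
      set j := F (SA i + 1) with hjdef
      have hne : SA j ≠ 1 := by rw [hFj.2]; omega
      have hLj : L j = c := by
        rw [hL j hFj.1.1 hFj.1.2, if_neg hne, hFj.2]
        simpa using hTc
      have hkey := hLF j hFj.1.1 hFj.1.2 hLj
      have hSAj1 : SA j - 1 = SA i := by rw [hFj.2]; omega
      rw [hSAj1, hFSA i hi1 hin] at hkey
      have hstep := rank_step L hFj.1.1 hLj
      -- b ≤ j
      have hjb : b ≤ j := by
        by_contra hlt
        push_neg at hlt
        have : rankL L c j ≤ rankL L c (b - 1) := rank_mono L c (by omega)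
        omega
      -- j ≤ e
      have hje : j ≤ e := by
        by_contra hlt
        push_neg at hlt
        have : rankL L c e ≤ rankL L c (j - 1) := rank_mono L c (by omega)
        omega
      have hjIv : j ∈ SAIv T SA n Y := by
        rw [hIv, Set.mem_Icc]; exact ⟨hjb, hje⟩
      obtain ⟨-, -, hYpre⟩ := hjIv
      refine ⟨hi1, hin, ?_⟩
      rw [suffix_cons T hSAi.1 hSAi.2]
      apply List.cons_prefix_cons.mpr
      refine ⟨hTc.symm, ?_⟩
      rw [hFj.2] at hYpre
      exact hYpre
  refine ⟨hmain, ?_⟩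
  rw [hmain, Set.Icc_eq_empty_iff]
  have : rankL L c (b - 1) ≤ rankL L c e := rank_mono L c (by omega)
  omega
end

section
/- Let P be a substring of T with |P| ≥ 2 whose SA interval I(P) equals a nonempty interval [b..e] for which case (A) holds. Then L[j] = P[1] for every j ∈ I(P[2..]); consequently, for every j ∈ I(P[2..]) one has SA[j] ≥ 2 and SA[j] − 1 ∈ Occ(T, P). In particular, if P = T[k..k+|P|−1] and v = SA[j] for some j ∈ I(P[2..]) satisfies v ≥ k + 2, then v − 1 is an occurrence of P with v − 1 ≥ k + 1. -/
/-- The substring `T[x..x+l-1]` of a 1-indexed string, as a list. -/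
def substr {α : Type*} (T : ℕ → α) (x l : ℕ) : List α :=
  (List.range' x l).map T

/-- `Occ(T,P)`: the set of starting positions of occurrences of `P` in `T`. -/
def Occ {α : Type*} (T : ℕ → α) (n : ℕ) (P : List α) : Set ℕ :=
  {i | 1 ≤ i ∧ i + P.length ≤ n + 1 ∧ P = substr T i P.length}

/-- Case (A) holds for an interval `[b..e]` if there exists `i ∈ [1..r]` with
`Z[i] < b` and `e < Z[i+1] − 1`. -/
def CaseA (Z : ℕ → ℕ) (r b e : ℕ) : Prop :=
  ∃ i, 1 ≤ i ∧ i ≤ r ∧ Z i < b ∧ e < Z (i + 1) - 1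

open Set
open scoped Finset

theorem Set.OrdConnected.subset_Ioo_of_notMem {β : Type*} [LinearOrder β] {s : Set β}
    (hs : s.OrdConnected) {a x b : β} (hx : x ∈ s) (ha : a ∉ s) (hb : b ∉ s) (hax : a < x)
    (hxb : x < b) : s ⊆ Ioo a b := by
  intro y hy
  by_contra h
  rcases not_and_or.mp h with h | h
  · exact ha (hs.out hy hx ⟨not_lt.mp h, hax.le⟩)
  · exact hb (hs.out hx hy ⟨hxb.le, not_lt.mp h⟩)

section Strings

variable {α : Type*}

theorem suffix_eq_cons_s8 {T : ℕ → α} {n i : ℕ} (h : i ≤ n) :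
    suffix T n i = T i :: suffix T n (i + 1) := by
  rw [suffix, show n + 1 - i = n + 1 - (i + 1) + 1 by omega, List.range'_succ]
  rfl

theorem mem_Occ_of_prefix_suffix {T : ℕ → α} {n v : ℕ} {P : List α} (hv1 : 1 ≤ v)
    (hvn : v ≤ n) (h : P <+: suffix T n v) : v ∈ Occ T n P := by
  have hlen : P.length ≤ n + 1 - v := by simpa [suffix] using h.length_le
  refine ⟨hv1, by omega, ?_⟩
  calc P = (suffix T n v).take P.length := List.prefix_iff_eq_take.mp h
    _ = substr T v P.length := by
      rw [suffix, ← List.map_take, List.take_range'_of_length_ge hlen]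
      rfl

variable [LinearOrder α]

theorem List.IsPrefix.of_not_lex {Q s s' v : List α} (h₁ : ¬ List.Lex (· < ·) v (Q ++ s))
    (h₂ : ¬ List.Lex (· < ·) (Q ++ s') v) : Q <+: v := by
  induction Q generalizing v with
  | nil => exact List.nil_prefix
  | cons q Q ih =>
    obtain _ | ⟨a, v⟩ := v
    · exact absurd List.Lex.nil h₁
    · obtain rfl : a = q :=
        le_antisymm (not_lt.mp fun h => h₂ (.rel h)) (not_lt.mp fun h => h₁ (.rel h))
      exact List.cons_prefix_cons.mpr
        ⟨rfl, ih (fun h => h₁ (.cons h)) (fun h => h₂ (.cons h))⟩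

theorem last_lt_of_eq_substr {T : ℕ → α} {n x : ℕ} {c : α} {Q : List α}
    (hlast : ∀ i, 1 ≤ i → i < n → T n < T i) (hQ : Q ≠ []) (hx1 : 1 ≤ x)
    (hxn : x + (c :: Q).length ≤ n + 1) (hsub : c :: Q = substr T x (c :: Q).length) :
    T n < c := by
  have hcx : c = T x := by simpa [substr, List.range'_succ] using congrArg List.head? hsub
  have hQ1 := List.length_pos_iff.mpr hQ
  exact hcx ▸ hlast x hx1 (by simp only [List.length_cons] at hxn; omega)

end Strings

section LF

variable {α : Type*} [LinearOrder α]

theorem LF_eq_card {L : ℕ → α} {n j : ℕ} (hj : j ≤ n) :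
    LF L n j = #{i ∈ Finset.Icc 1 n | toLex (L i, i) ≤ toLex (L j, j)} := by
  rw [LF, Cc, rankL, ← Finset.card_union_of_disjoint]
  · congr 1
    ext i
    simp only [Finset.mem_union, Finset.mem_filter, Finset.mem_Icc, Prod.Lex.toLex_le_toLex]
    grind
  · exact Finset.disjoint_left.mpr fun i hlt heq =>
      (Finset.mem_filter.mp hlt).2.ne (Finset.mem_filter.mp heq).2

theorem LF_add_of_const {L : ℕ → α} {n s ℓ : ℕ}
    (hconst : ∀ j, s ≤ j → j < s + ℓ → L j = L s) {k : ℕ} (hk : k < ℓ) :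
    LF L n (s + k) = LF L n s + k := by
  induction k with
  | zero => rfl
  | succ k ih =>
    have hsucc : rankL L (L s) (s + k + 1) = rankL L (L s) (s + k) + 1 := by
      rw [rankL, rankL, ← Finset.insert_Icc_right_eq_Icc_add_one (by omega), Finset.filter_insert,
        if_pos (hconst _ (by omega) (by omega)), Finset.card_insert_of_notMem (by simp)]
    have := ih (by omega)
    rw [LF, LF] at this ⊢
    rw [hconst _ (by omega) (by omega)] at this
    rw [← add_assoc, hconst _ (by omega) (by omega), hsucc]
    omega

end LF

structure IsSuffixArray {α : Type*} [LinearOrder α] (T : ℕ → α) (n : ℕ)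
    (SA : ℕ → ℕ) : Prop where
  bijOn : BijOn SA (Icc 1 n) (Icc 1 n)
  sorted : ∀ i j, 1 ≤ i → i < j → j ≤ n →
    List.Lex (· < ·) (suffix T n (SA i)) (suffix T n (SA j))

/-- `Ψ[t] = SA⁻¹[SA[t] + 1]`, with `SA[t] + 1` read cyclically. -/
noncomputable def psi (SA : ℕ → ℕ) (n t : ℕ) : ℕ :=
  Function.invFunOn SA (Icc 1 n) (if SA t = n then 1 else SA t + 1)

def IsBWT {α : Type*} (T : ℕ → α) (n : ℕ) (SA : ℕ → ℕ) (L : ℕ → α) : Prop :=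
  ∀ i, 1 ≤ i → i ≤ n → L i = if SA i = 1 then T n else T (SA i - 1)

namespace IsSuffixArray

variable {α : Type*} [LinearOrder α] {T L : ℕ → α} {n : ℕ} {SA : ℕ → ℕ}

theorem not_lex_of_le (hSA : IsSuffixArray T n SA) {u w : ℕ} (hu : 1 ≤ u) (hw : w ≤ n)
    (h : u ≤ w) : ¬ List.Lex (· < ·) (suffix T n (SA w)) (suffix T n (SA u)) := by
  rcases h.eq_or_lt with rfl | h
  · exact fun h' => asymm h' h'
  · exact asymm (hSA.sorted u w hu h hw)

theorem lt_of_lex (hSA : IsSuffixArray T n SA) {u w : ℕ} (hu : u ∈ Icc 1 n) (hw : w ∈ Icc 1 n)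
    (h : List.Lex (· < ·) (suffix T n (SA u)) (suffix T n (SA w))) : u < w :=
  not_le.mp fun hwu => hSA.not_lex_of_le hw.1 hu.2 hwu h

theorem ordConnected_SAIv (hSA : IsSuffixArray T n SA) (Y : List α) :
    (SAIv T SA n Y).OrdConnected := by
  refine ordConnected_def.mpr
    fun a ⟨ha1, _, s, hs⟩ a' ⟨_, ha'n, s', hs'⟩ w ⟨haw, hwa'⟩ =>
    ⟨by omega, by omega, List.IsPrefix.of_not_lex (s := s) (s' := s') ?_ ?_⟩
  · rw [hs]; exact hSA.not_lex_of_le ha1 (by omega) haw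
  · rw [hs']; exact hSA.not_lex_of_le (by omega) ha'n hwa'

theorem psi_mem (hSA : IsSuffixArray T n SA) {t : ℕ} (ht : t ∈ Icc 1 n) :
    psi SA n t ∈ Icc 1 n :=
  hSA.bijOn.surjOn.mapsTo_invFunOn (by have := hSA.bijOn.mapsTo ht; grind)

theorem SA_psi (hSA : IsSuffixArray T n SA) {t : ℕ} (ht : t ∈ Icc 1 n) :
    SA (psi SA n t) = if SA t = n then 1 else SA t + 1 :=
  hSA.bijOn.surjOn.rightInvOn_invFunOn (by have := hSA.bijOn.mapsTo ht; grind)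

theorem psi_bijOn (hSA : IsSuffixArray T n SA) : BijOn (psi SA n) (Icc 1 n) (Icc 1 n) := by
  have hcyc : BijOn (fun v => if v = n then 1 else v + 1) (Icc 1 n) (Icc 1 n) := by
    refine ⟨fun v hv => by grind, fun v hv v' hv' h => by grind, fun v hv => ?_⟩
    exact ⟨if v = 1 then n else v - 1, by grind, by grind⟩
  exact (hSA.bijOn.symm hSA.bijOn.invOn_invFunOn.symm).comp (hcyc.comp hSA.bijOn)

theorem L_psi (hSA : IsSuffixArray T n SA) (hL : IsBWT T n SA L)
    {t : ℕ} (ht : t ∈ Icc 1 n) : L (psi SA n t) = T (SA t) := by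
  have := hSA.bijOn.mapsTo ht
  have hmem := hSA.psi_mem ht
  rw [hL _ hmem.1 hmem.2, hSA.SA_psi ht]
  grind

theorem toLex_lt_toLex_psi (hSA : IsSuffixArray T n SA)
    (hlast : ∀ i, 1 ≤ i → i < n → T n < T i)
    {u w : ℕ} (hu : u ∈ Icc 1 n) (hw : w ∈ Icc 1 n) (huw : u < w) :
    toLex (T (SA u), psi SA n u) < toLex (T (SA w), psi SA n w) := by
  have hSAu := hSA.bijOn.mapsTo hu
  have hSAw := hSA.bijOn.mapsTo hw
  have hlex := hSA.sorted u w hu.1 huw hw.2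
  rw [suffix_eq_cons_s8 hSAu.2, suffix_eq_cons_s8 hSAw.2, List.cons_lex_cons_iff] at hlex
  rw [Prod.Lex.toLex_lt_toLex]
  refine hlex.imp_right fun ⟨heq, htail⟩ =>
    ⟨heq, hSA.lt_of_lex (hSA.psi_mem hu) (hSA.psi_mem hw) ?_⟩
  have hne : SA u ≠ SA w := hSA.bijOn.injOn.ne hu hw huw.ne
  have hlast_eq : ∀ v ∈ Icc 1 n, T v = T n → v = n := fun v hv h => by
    by_contra hvn
    exact (hlast v hv.1 (lt_of_le_of_ne hv.2 hvn)).ne' h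
  have hu' : SA u ≠ n := fun h => hne (by rw [h, hlast_eq _ hSAw (by rw [← heq, h])])
  have hw' : SA w ≠ n := fun h => hne (by rw [h, hlast_eq _ hSAu (by rw [heq, h])])
  rwa [hSA.SA_psi hu, hSA.SA_psi hw, if_neg hu', if_neg hw']

theorem LF_psi (hSA : IsSuffixArray T n SA) (hlast : ∀ i, 1 ≤ i → i < n → T n < T i)
    (hL : IsBWT T n SA L) {t : ℕ} (ht : t ∈ Icc 1 n) : LF L n (psi SA n t) = t := by
  have hmono : StrictMonoOn (fun u => toLex (L (psi SA n u), psi SA n u)) (Icc 1 n) :=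
    fun u hu w hw huw => by
      simpa only [hSA.L_psi hL hu, hSA.L_psi hL hw] using hSA.toLex_lt_toLex_psi hlast hu hw huw
  have hpsi := hSA.psi_bijOn
  rw [LF_eq_card (hSA.psi_mem ht).2]
  calc _ = #{u ∈ Finset.Icc 1 n | u ≤ t} := by
        refine (Finset.card_nbij (psi SA n) (fun u hu => ?_) ?_ fun i hi => ?_).symm
        · simp only [Finset.coe_filter, Finset.mem_Icc, mem_ofPred_eq] at hu ⊢
          exact ⟨hpsi.mapsTo hu.1, (hmono.le_iff_le hu.1 ht).mpr hu.2⟩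
        · exact hpsi.injOn.mono fun u hu => (Finset.mem_filter.mp hu).1 |> Finset.mem_Icc.mp
        · simp only [Finset.coe_filter, Finset.mem_Icc, mem_ofPred_eq] at hi
          obtain ⟨u, hu, rfl⟩ := hpsi.surjOn hi.1
          refine ⟨u, ?_, rfl⟩
          simpa [Finset.mem_Icc] using ⟨hu, (hmono.le_iff_le hu ht).mp hi.2⟩
    _ = t := by
        rw [show {u ∈ Finset.Icc 1 n | u ≤ t} = Finset.Icc 1 t by
          ext u; simp only [Finset.mem_filter, Finset.mem_Icc]; grind, Nat.card_Icc]
        omega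

theorem LF_bijOn (hSA : IsSuffixArray T n SA) (hlast : ∀ i, 1 ≤ i → i < n → T n < T i)
    (hL : IsBWT T n SA L) : BijOn (LF L n) (Icc 1 n) (Icc 1 n) := by
  have hpsi := hSA.psi_bijOn
  refine hpsi.symm ⟨fun j hj => ?_, fun t ht => hSA.LF_psi hlast hL ht⟩
  obtain ⟨t, ht, rfl⟩ := hpsi.surjOn hj
  rw [hSA.LF_psi hlast hL ht]

theorem mem_SAIv_cons_iff (hSA : IsSuffixArray T n SA) (hL : IsBWT T n SA L) {c : α}
    (hc : c ≠ T n) (Q : List α) {t : ℕ} (ht : t ∈ Icc 1 n) :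
    t ∈ SAIv T SA n (c :: Q) ↔ L (psi SA n t) = c ∧ psi SA n t ∈ SAIv T SA n Q := by
  have hSAt := hSA.bijOn.mapsTo ht
  have hpsi := hSA.psi_mem ht
  simp only [SAIv, mem_ofPred_eq, hpsi.1, hpsi.2, ht.1, ht.2, true_and, hSA.L_psi hL ht,
    suffix_eq_cons_s8 hSAt.2, List.cons_prefix_cons, hSA.SA_psi ht]
  by_cases h : SA t = n
  · simp only [h, if_true]
    exact ⟨fun h' => absurd h'.1 hc, fun h' => absurd h'.1.symm hc⟩
  · simp only [h, if_false, eq_comm]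

theorem L_eq_of_mem_SAIv_tail (hSA : IsSuffixArray T n SA)
    (hlast : ∀ i, 1 ≤ i → i < n → T n < T i) (hL : IsBWT T n SA L) {c : α} (hc : c ≠ T n)
    {Q : List α} {b e : ℕ} (hbe : b ≤ e) (hIv : SAIv T SA n (c :: Q) = Icc b e)
    {u u' : ℕ} (hu : 1 ≤ u) (huu' : u ≤ u') (hu' : u' ≤ n)
    (hblock : ∀ w ∈ Icc u u', L w = L u ∧ LF L n w = LF L n u + (w - u))
    (hb : LF L n u < b) (he : e < LF L n u') {j : ℕ} (hj : j ∈ SAIv T SA n Q) : L j = c := by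
  have hfwd : ∀ w ∈ SAIv T SA n Q, L w = c → LF L n w ∈ Icc b e := by
    intro w hw hLw
    obtain ⟨t, ht, rfl⟩ := hSA.psi_bijOn.surjOn ⟨hw.1, hw.2.1⟩
    rw [hSA.LF_psi hlast hL ht, ← hIv, hSA.mem_SAIv_cons_iff hL hc Q ht]
    exact ⟨hLw, hw⟩
  have hbI : b ∈ SAIv T SA n (c :: Q) := hIv ▸ ⟨le_rfl, hbe⟩
  have hb' : b ∈ Icc 1 n := ⟨hbI.1, hbI.2.1⟩
  obtain ⟨hLb, hbQ⟩ := (hSA.mem_SAIv_cons_iff hL hc Q hb').mp hbI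
  have hLFu' := (hblock u' ⟨huu', le_rfl⟩).2
  have hw₀ : u + (b - LF L n u) ∈ Icc u u' := ⟨by omega, by omega⟩
  have hpsib : psi SA n b = u + (b - LF L n u) :=
    (hSA.LF_bijOn hlast hL).injOn (hSA.psi_mem hb') ⟨by omega, by omega⟩
      (by rw [hSA.LF_psi hlast hL hb', (hblock _ hw₀).2]; omega)
  have hLu : L u = c := by rw [← (hblock _ hw₀).1, ← hpsib, hLb]
  have hout : ∀ w ∈ Icc u u', LF L n w ∉ Icc b e → w ∉ SAIv T SA n Q :=
    fun w hw h hwQ => h (hfwd w hwQ (by rw [(hblock w hw).1, hLu]))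
  have hsub := (hSA.ordConnected_SAIv Q).subset_Ioo_of_notMem (hpsib ▸ hbQ)
    (hout u ⟨le_rfl, huu'⟩ (by simp only [mem_Icc]; omega))
    (hout u' ⟨huu', le_rfl⟩ (by simp only [mem_Icc]; omega)) (by omega) (by omega) hj
  rw [(hblock j (Ioo_subset_Icc_self hsub)).1, hLu]

theorem pred_mem_Occ_of_L_eq (hSA : IsSuffixArray T n SA) (hL : IsBWT T n SA L) {c : α}
    (hc : c ≠ T n) {Q : List α} {j : ℕ} (hj : j ∈ SAIv T SA n Q) (hLj : L j = c) :
    2 ≤ SA j ∧ SA j - 1 ∈ Occ T n (c :: Q) := by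
  obtain ⟨hj1, hjn, hjQ⟩ := hj
  obtain ⟨hSAj1, hSAjn⟩ := hSA.bijOn.mapsTo ⟨hj1, hjn⟩
  have hSAj : SA j ≠ 1 := fun h => hc (by rw [← hLj, hL j hj1 hjn, if_pos h])
  refine ⟨by omega, mem_Occ_of_prefix_suffix (by omega) (by omega) ?_⟩
  rw [suffix_eq_cons_s8 (by omega), Nat.sub_add_cancel (by omega), ← hLj, hL j hj1 hjn, if_neg hSAj]
  exact List.cons_prefix_cons.mpr ⟨rfl, hjQ⟩

end IsSuffixArray

structure IsBlockDecomposition {α : Type*} (L : ℕ → α) (n r : ℕ)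
    (p len : ℕ → ℕ) : Prop where
  start_one : p 1 = 1
  start_last : p (r + 1) = n + 1
  start_succ : ∀ m, 1 ≤ m → m ≤ r → p (m + 1) = p m + len m
  len_pos : ∀ m, 1 ≤ m → m ≤ r → 1 ≤ len m
  const : ∀ m, 1 ≤ m → m ≤ r → ∀ j, p m ≤ j → j < p (m + 1) → L j = L (p m)

namespace IsBlockDecomposition

variable {α : Type*} {L : ℕ → α} {n r : ℕ} {p len : ℕ → ℕ}

theorem strictMonoOn (h : IsBlockDecomposition L n r p len) : StrictMonoOn p (Icc 1 (r + 1)) :=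
  strictMonoOn_of_lt_succ ordConnected_Icc fun a _ ha hsa => by
    rw [Order.succ_eq_add_one] at hsa ⊢
    have := h.len_pos a ha.1 (by have := hsa.2; omega)
    rw [h.start_succ a ha.1 (by have := hsa.2; omega)]
    omega

theorem start_add_len_le (h : IsBlockDecomposition L n r p len) {m : ℕ} (hm : m ∈ Icc 1 r) :
    p m + len m ≤ n + 1 := by
  obtain ⟨hm1, hmr⟩ := hm
  rw [← h.start_succ m hm1 hmr, ← h.start_last]
  exact h.strictMonoOn.monotoneOn ⟨by omega, by omega⟩ ⟨by omega, le_rfl⟩ (by omega)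

theorem start_mem (h : IsBlockDecomposition L n r p len) {m : ℕ} (hm : m ∈ Icc 1 r) :
    p m ∈ Icc 1 n := by
  have h2 := h.start_add_len_le hm
  obtain ⟨hm1, hmr⟩ := hm
  have h1 := h.strictMonoOn.monotoneOn ⟨le_rfl, by omega⟩ ⟨hm1, by omega⟩ hm1
  have h3 := h.len_pos m hm1 hmr
  rw [h.start_one] at h1
  exact ⟨h1, by omega⟩

theorem start_succ_le_of_start_lt (h : IsBlockDecomposition L n r p len) {m m' : ℕ}
    (hm : m ∈ Icc 1 r) (hm' : m' ∈ Icc 1 r) (hlt : p m < p m') : p (m + 1) ≤ p m' := by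
  obtain ⟨hm1, hmr⟩ := hm
  obtain ⟨hm1', hmr'⟩ := hm'
  have hmm' := (h.strictMonoOn.lt_iff_lt ⟨hm1, by omega⟩ ⟨hm1', by omega⟩).mp hlt
  exact h.strictMonoOn.monotoneOn ⟨by omega, by omega⟩ ⟨hm1', by omega⟩ hmm'

theorem exists_mem_block (h : IsBlockDecomposition L n r p len) {j : ℕ} (hj : j ∈ Icc 1 n) :
    ∃ m ∈ Icc 1 r, p m ≤ j ∧ j < p (m + 1) := by
  classical
  obtain ⟨hj1, hjn⟩ := hj
  have hp1 : p 1 ≤ j := by rw [h.start_one]; exact hj1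
  have hr : 1 ≤ r := by
    by_contra hr
    have := h.start_last
    rw [Nat.lt_one_iff.mp (not_le.mp hr), h.start_one] at this
    omega
  have hle := Nat.findGreatest_le (P := fun m => p m ≤ j) r
  refine ⟨_, ⟨Nat.le_findGreatest hr hp1, hle⟩,
    Nat.findGreatest_spec (P := fun m => p m ≤ j) hr hp1, ?_⟩
  rcases hle.eq_or_lt with hm | hm
  · rw [hm, h.start_last]
    omega
  · exact not_le.mp
      (Nat.findGreatest_is_greatest (P := fun m => p m ≤ j) (Nat.lt_succ_self _) hm)

variable [LinearOrder α]

theorem LF_start_add (h : IsBlockDecomposition L n r p len) {m : ℕ}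
    (hm : m ∈ Icc 1 r) {k : ℕ} (hk : k < len m) : LF L n (p m + k) = LF L n (p m) + k :=
  LF_add_of_const
    (fun j h1 h2 => h.const m hm.1 hm.2 j h1 (by rw [h.start_succ m hm.1 hm.2]; exact h2)) hk

theorem LF_start_notMem_Ioo (h : IsBlockDecomposition L n r p len)
    (hLF : InjOn (LF L n) (Icc 1 n)) {m m₀ : ℕ} (hm : m ∈ Icc 1 r) (hm₀ : m₀ ∈ Icc 1 r) :
    LF L n (p m) ∉ Ioo (LF L n (p m₀)) (LF L n (p m₀) + len m₀) := by
  rintro ⟨hlo, hhi⟩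
  have hpm := h.start_mem hm
  have hlen := h.start_add_len_le hm₀
  have hstart : p m₀ + (LF L n (p m) - LF L n (p m₀)) = p m := by
    refine hLF ⟨by have := (h.start_mem hm₀).1; omega, by omega⟩ hpm ?_
    rw [h.LF_start_add hm₀ (by omega)]
    omega
  have := h.start_succ_le_of_start_lt hm₀ hm (by omega)
  rw [h.start_succ _ hm₀.1 hm₀.2] at this
  omega

/-- The LF-images of the blocks are consecutive intervals tiling `[1..n]`. -/
theorem Z_succ_le_add_len (h : IsBlockDecomposition L n r p len)
    (hLF : BijOn (LF L n) (Icc 1 n) (Icc 1 n)) {X Z : ℕ → ℕ}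
    (hXbij : BijOn X (Icc 1 r) (Icc 1 r))
    (hXsorted : ∀ i j, 1 ≤ i → i < j → j ≤ r → LF L n (p (X i)) < LF L n (p (X j)))
    (hZ : ∀ i, 1 ≤ i → i ≤ r → Z i = LF L n (p (X i))) (hZend : Z (r + 1) = n + 1)
    {i : ℕ} (hi : i ∈ Icc 1 r) : Z (i + 1) ≤ Z i + len (X i) := by
  obtain ⟨hi1, hir⟩ := hi
  by_contra! hlt
  have hZi := hZ i hi1 hir
  have hXi := hXbij.mapsTo ⟨hi1, hir⟩
  have hlen := h.len_pos _ hXi.1 hXi.2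
  have hZle : Z (i + 1) ≤ n + 1 := by
    rcases hir.eq_or_lt with rfl | hir'
    · exact hZend.le
    · rw [hZ (i + 1) (by omega) hir']
      have := hLF.mapsTo (h.start_mem (hXbij.mapsTo ⟨by omega, hir'⟩))
      exact Nat.le_succ_of_le this.2
  obtain ⟨j₀, hj₀, hq⟩ :=
    hLF.surjOn (show Z i + len (X i) ∈ Icc 1 n from ⟨by omega, by omega⟩)
  obtain ⟨m₀, hm₀, hpj, hjp⟩ := h.exists_mem_block hj₀
  obtain ⟨i₀, ⟨hi₀1, hi₀r⟩, rfl⟩ := hXbij.surjOn hm₀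
  have hk : j₀ - p (X i₀) < len (X i₀) := by
    rw [h.start_succ _ hm₀.1 hm₀.2] at hjp
    omega
  have hq₀ : Z i₀ + (j₀ - p (X i₀)) = Z i + len (X i) := by
    rw [hZ i₀ hi₀1 hi₀r, ← h.LF_start_add hm₀ hk, Nat.add_sub_cancel' hpj]
    exact hq
  rcases lt_trichotomy i₀ i with hi₀ | rfl | hi₀
  · have hZ₀ : Z i₀ < Z i := by
      rw [hZ i₀ hi₀1 hi₀r, hZi]
      exact hXsorted i₀ i hi₀1 hi₀ hir
    refine h.LF_start_notMem_Ioo hLF.injOn hXi hm₀ ?_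
    rw [← hZi, ← hZ i₀ hi₀1 hi₀r]
    exact ⟨hZ₀, by omega⟩
  · omega
  · have : Z (i + 1) ≤ Z i₀ := by
      rcases (show i + 1 ≤ i₀ by omega).eq_or_lt with rfl | hlt'
      · exact le_rfl
      · rw [hZ _ (by omega) (by omega), hZ i₀ hi₀1 hi₀r]
        exact (hXsorted _ _ (by omega) hlt' hi₀r).le
    omega

theorem exists_LF_block_of_caseA (h : IsBlockDecomposition L n r p len)
    (hLF : BijOn (LF L n) (Icc 1 n) (Icc 1 n)) {X Z : ℕ → ℕ}
    (hXbij : BijOn X (Icc 1 r) (Icc 1 r))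
    (hXsorted : ∀ i j, 1 ≤ i → i < j → j ≤ r → LF L n (p (X i)) < LF L n (p (X j)))
    (hZ : ∀ i, 1 ≤ i → i ≤ r → Z i = LF L n (p (X i))) (hZend : Z (r + 1) = n + 1)
    {b e : ℕ} (hbe : b ≤ e) (hA : CaseA Z r b e) :
    ∃ u u', 1 ≤ u ∧ u ≤ u' ∧ u' ≤ n ∧
      (∀ w ∈ Icc u u', L w = L u ∧ LF L n w = LF L n u + (w - u)) ∧
      LF L n u < b ∧ e < LF L n u' := by
  obtain ⟨i, hi1, hir, hb, he⟩ := hA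
  have hXi := hXbij.mapsTo ⟨hi1, hir⟩
  have hK := h.Z_succ_le_add_len hLF hXbij hXsorted hZ hZend ⟨hi1, hir⟩
  have hZi := hZ i hi1 hir
  obtain ⟨hpX1, hpXn⟩ := h.start_mem hXi
  have hpXlen := h.start_add_len_le hXi
  have hblock : ∀ w, p (X i) ≤ w → w < p (X i) + len (X i) →
      L w = L (p (X i)) ∧ LF L n w = Z i + (w - p (X i)) := fun w hw₁ hw₂ =>
    ⟨h.const _ hXi.1 hXi.2 _ hw₁ (by rw [h.start_succ _ hXi.1 hXi.2]; exact hw₂),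
      by rw [hZi, ← h.LF_start_add hXi (k := w - p (X i)) (by omega),
        Nat.add_sub_cancel' hw₁]⟩
  have hu := hblock (p (X i) + (b - 1 - Z i)) (by omega) (by omega)
  have hu' := hblock (p (X i) + (e + 1 - Z i)) (by omega) (by omega)
  refine ⟨p (X i) + (b - 1 - Z i), p (X i) + (e + 1 - Z i), by omega, by omega, by omega,
    fun w ⟨hw₁, hw₂⟩ => ?_, by omega, by omega⟩
  have hw := hblock w (by omega) (by omega)
  exact ⟨hw.1.trans hu.1.symm, by omega⟩

end IsBlockDecomposition

theorem stmt8_general {α : Type*} [LinearOrder α] (n : ℕ)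
    (T : ℕ → α) (SA : ℕ → ℕ) (L : ℕ → α)
    (hlast : ∀ i, 1 ≤ i → i < n → T n < T i)
    (hSAbij : Set.BijOn SA (Set.Icc 1 n) (Set.Icc 1 n))
    (hSAsorted : ∀ i j, 1 ≤ i → i < j → j ≤ n →
      List.Lex (· < ·) (suffix T n (SA i)) (suffix T n (SA j)))
    (hL : ∀ i, 1 ≤ i → i ≤ n → L i = if SA i = 1 then T n else T (SA i - 1))
    -- the run-length encoding `L_1, …, L_r` of `L`: run `L_m` starts at `p m`
    -- and has length `len m`
    (r : ℕ) (p len : ℕ → ℕ)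
    (hp1 : p 1 = 1) (hpend : p (r + 1) = n + 1)
    (hpsucc : ∀ m, 1 ≤ m → m ≤ r → p (m + 1) = p m + len m)
    (hlen : ∀ m, 1 ≤ m → m ≤ r → 1 ≤ len m)
    (hrunconst : ∀ m, 1 ≤ m → m ≤ r → ∀ j, p m ≤ j → j < p (m + 1) → L j = L (p m))
    -- `X` is the permutation of `[1..r]` sorting the runs by `LF(p(·))`
    (X : ℕ → ℕ)
    (hXbij : Set.BijOn X (Set.Icc 1 r) (Set.Icc 1 r))
    (hXsorted : ∀ i j, 1 ≤ i → i < j → j ≤ r → LF L n (p (X i)) < LF L n (p (X j)))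
    -- `Z[i] = LF(p(X[i]))` for `i ∈ [1..r]`, and `Z[r+1] = n+1`
    (Z : ℕ → ℕ)
    (hZ : ∀ i, 1 ≤ i → i ≤ r → Z i = LF L n (p (X i)))
    (hZend : Z (r + 1) = n + 1)
    (c : α) (Q : List α) (hQ : Q ≠ []) (x : ℕ)
    (hx1 : 1 ≤ x) (hxn : x + (c :: Q).length ≤ n + 1)
    (hsub : c :: Q = substr T x (c :: Q).length)
    (b e : ℕ) (hbe : b ≤ e)
    (hIv : SAIv T SA n (c :: Q) = Set.Icc b e)
    (hA : CaseA Z r b e) :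
    ∀ j ∈ SAIv T SA n Q,
      L j = c ∧ 2 ≤ SA j ∧ SA j - 1 ∈ Occ T n (c :: Q) ∧
      (x + 2 ≤ SA j → x + 1 ≤ SA j - 1 ∧ SA j - 1 ∈ Occ T n (c :: Q)) := by
  intro j hj
  have hSA : IsSuffixArray T n SA := ⟨hSAbij, hSAsorted⟩
  have hc : c ≠ T n := (last_lt_of_eq_substr hlast hQ hx1 hxn hsub).ne'
  obtain ⟨u, u', hu, huu', hu', hblock, hb, he⟩ :=
    IsBlockDecomposition.exists_LF_block_of_caseA ⟨hp1, hpend, hpsucc, hlen, hrunconst⟩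
      (hSA.LF_bijOn hlast hL) hXbij hXsorted hZ hZend hbe hA
  have hLj := hSA.L_eq_of_mem_SAIv_tail hlast hL hc hbe hIv hu huu' hu' hblock hb he hj
  obtain ⟨hSAj, hOcc⟩ := hSA.pred_mem_Occ_of_L_eq hL hc hj hLj
  exact ⟨hLj, hSAj, hOcc, fun _ => ⟨by omega, hOcc⟩⟩

/-- Let `P = c :: Q` (so `|P| ≥ 2` since `Q ≠ []`) be a substring of `T`
starting at position `x` whose SA interval equals a nonempty interval `[b..e]`
for which case (A) holds.  Then `L[j] = P[1]` for every `j ∈ I(P[2..])`;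
consequently, for every `j ∈ I(P[2..])`, `SA[j] ≥ 2` and
`SA[j] − 1 ∈ Occ(T, P)`.  In particular, if `v = SA[j]` satisfies `v ≥ x + 2`,
then `v − 1` is an occurrence of `P` with `v − 1 ≥ x + 1`. -/
theorem stmt8 {α : Type*} [LinearOrder α] (n : ℕ) (hn : 1 ≤ n)
    (T : ℕ → α) (SA : ℕ → ℕ) (L : ℕ → α)
    (hlast : ∀ i, 1 ≤ i → i < n → T n < T i)
    (hSAbij : Set.BijOn SA (Set.Icc 1 n) (Set.Icc 1 n))
    (hSAsorted : ∀ i j, 1 ≤ i → i < j → j ≤ n →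
      List.Lex (· < ·) (suffix T n (SA i)) (suffix T n (SA j)))
    (hL : ∀ i, 1 ≤ i → i ≤ n → L i = if SA i = 1 then T n else T (SA i - 1))
    -- the run-length encoding `L_1, …, L_r` of `L`: run `L_m` starts at `p m`
    -- and has length `len m`
    (r : ℕ) (p len : ℕ → ℕ) (hr : 1 ≤ r)
    (hp1 : p 1 = 1) (hpend : p (r + 1) = n + 1)
    (hpsucc : ∀ m, 1 ≤ m → m ≤ r → p (m + 1) = p m + len m)
    (hlen : ∀ m, 1 ≤ m → m ≤ r → 1 ≤ len m)
    (hrunconst : ∀ m, 1 ≤ m → m ≤ r → ∀ j, p m ≤ j → j < p (m + 1) → L j = L (p m))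
    (hrunmax : ∀ m, 1 ≤ m → m < r → L (p m) ≠ L (p (m + 1)))
    -- `X` is the permutation of `[1..r]` sorting the runs by `LF(p(·))`
    (X : ℕ → ℕ)
    (hXbij : Set.BijOn X (Set.Icc 1 r) (Set.Icc 1 r))
    (hXsorted : ∀ i j, 1 ≤ i → i < j → j ≤ r → LF L n (p (X i)) < LF L n (p (X j)))
    -- `Z[i] = LF(p(X[i]))` for `i ∈ [1..r]`, and `Z[r+1] = n+1`
    (Z : ℕ → ℕ)
    (hZ : ∀ i, 1 ≤ i → i ≤ r → Z i = LF L n (p (X i)))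
    (hZend : Z (r + 1) = n + 1)
    (c : α) (Q : List α) (hQ : Q ≠ []) (x : ℕ)
    (hx1 : 1 ≤ x) (hxn : x + (c :: Q).length ≤ n + 1)
    (hsub : c :: Q = substr T x (c :: Q).length)
    (b e : ℕ) (hbe : b ≤ e)
    (hIv : SAIv T SA n (c :: Q) = Set.Icc b e)
    (hA : CaseA Z r b e) :
    ∀ j ∈ SAIv T SA n Q,
      L j = c ∧ 2 ≤ SA j ∧ SA j - 1 ∈ Occ T n (c :: Q) ∧
      (x + 2 ≤ SA j → x + 1 ≤ SA j - 1 ∧ SA j - 1 ∈ Occ T n (c :: Q)) :=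
  stmt8_general n T SA L hlast hSAbij hSAsorted hL r p len hp1 hpend hpsucc hlen hrunconst X hXbij
    hXsorted Z hZ hZend c Q hQ x hx1 hxn hsub b e hbe hIv hA
end
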